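/- Let k be a commutative ring and H a Hopf algebra over k with comultiplication Δ, counit ϵ, and antipode S, and assume H is cocommutative, i.e. τ ∘ Δ = Δ where τ : H ⊗_k H → H ⊗_k H is the flip. Let M be an (H,H)-bimodule over k (a left H-module and a right H-module with commuting actions, both restricting to the same k-module structure). For h ∈ H with Δ(h) = Σ h₍₁₎ ⊗ h₍₂₎ and m ∈ M, write ad(h)(m) = Σ h₍₁₎ · m · S(h₍₂₎). Then the k-submodule of M spanned by all commutators h·m − m·h (for h ∈ H, m ∈ M) is equal to the k-submodule of M spanned by all elements ad(h)(m) − ϵ(h)·m (for h ∈ H, m ∈ M). Equivalently, the identity map of M induces an isomorphism between the Hochschild-type coinvariants M/span{h·m − m·h} and the coinvariants of M for the adjoint H-action, M/span{ad(h)(m) − ϵ(h)m}. (This is the module-level, degree-zero content of the paper's identification Tr(F_M, H-mod) ≃ M ⊗_H 1 for a bimodule M over a cocommutative Hopf algebra H, equation (e:Tr for Hopf), which underlies the computation Tr(F_X, G-mod) ≃ Shv(X/Δ(G)).) -/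

import Mathlib

open TensorProduct

universe u

/-- The adjoint action of a Hopf algebra `H` on an `(H,H)`-bimodule `M`:
`ad(h)(m) = Σ h₍₁₎ • m • S(h₍₂₎)`, defined via the comultiplication and the antipode. -/
noncomputable def adjointAction (k : Type u) {H M : Type u}
    [CommRing k] [Ring H] [HopfAlgebra k H]
    [AddCommGroup M] [Module k M] [Module H M] [Module Hᵐᵒᵖ M]
    [IsScalarTower k H M] [IsScalarTower k Hᵐᵒᵖ M]
    [SMulCommClass k H M]
    (h : H) (m : M) : M :=
  TensorProduct.lift
    (LinearMap.mk₂ k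
      (fun a b => a • (MulOpposite.op (HopfAlgebra.antipode (R := k) b) • m))
      (fun a a' _ => add_smul a a' _)
      (fun c a _ => smul_assoc c a _)
      (fun _ b b' => by simp only [map_add, MulOpposite.op_add, add_smul, smul_add])
      (fun c a b => by
        simp only [map_smul, MulOpposite.op_smul, smul_assoc]
        exact (smul_comm c a _).symm))
    (Coalgebra.comul h)

section Aux

variable {k H M : Type u}
    [CommRing k] [Ring H] [HopfAlgebra k H]
    [AddCommGroup M] [Module k M] [Module H M] [Module Hᵐᵒᵖ M]
    [IsScalarTower k H M] [IsScalarTower k Hᵐᵒᵖ M]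
    [SMulCommClass k H M]

/-- The swap of a representation of `comul a`, valid when `a` is "cocommutative". -/
noncomputable def swapRepr {ι : Type*} {a : H} (r : Coalgebra.Repr k a ι)
    (hc : TensorProduct.comm k H H (Coalgebra.comul a) = Coalgebra.comul a) :
    Coalgebra.Repr k a ι where
  index := r.index
  left := r.right
  right := r.left
  eq := by
    rw [← hc, ← r.eq, map_sum]
    simp

lemma op_finset_sum {ι : Type*} (s : Finset ι) (f : ι → H) :
    MulOpposite.op (∑ i ∈ s, f i) = ∑ i ∈ s, MulOpposite.op (f i) := by
  simpa using map_sum (MulOpposite.opAddEquiv (α := H)) f s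

lemma op_smul_op_smul' (a b : H) (m : M) :
    MulOpposite.op a • (MulOpposite.op b • m) = MulOpposite.op (b * a) • m := by
  rw [MulOpposite.op_mul, mul_smul]

lemma adjointAction_repr {ι : Type*} {h : H} (m : M) (r : Coalgebra.Repr k h ι) :
    adjointAction k h m = ∑ i ∈ r.index,
      r.left i • (MulOpposite.op (HopfAlgebra.antipode (R := k) (r.right i)) • m) := by
  rw [adjointAction, ← r.eq, map_sum]
  simp

lemma sum_counit_smul_right {ι : Type*} {h : H} (r : Coalgebra.Repr k h ι) :
    ∑ i ∈ r.index, Coalgebra.counit (R := k) (r.left i) • r.right i = h := by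
  have h0 := congrArg (TensorProduct.lid k H) (Coalgebra.sum_counit_tmul_eq r)
  simp only [map_sum, TensorProduct.lid_tmul, one_smul] at h0
  exact h0

lemma sum_counit_smul_left {ι : Type*} {h : H} (r : Coalgebra.Repr k h ι) :
    ∑ i ∈ r.index, Coalgebra.counit (R := k) (r.right i) • r.left i = h := by
  have h0 := congrArg (TensorProduct.rid k H) (Coalgebra.sum_tmul_counit_eq r)
  simp only [map_sum, TensorProduct.rid_tmul, one_smul] at h0
  exact h0

/-- The trilinear map `a ⊗ (b ⊗ c) ↦ a • (op (c * S b) • m)`. -/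
noncomputable def tripleMap (m : M) : H ⊗[k] (H ⊗[k] H) →ₗ[k] M :=
  TensorProduct.lift
    (LinearMap.mk₂ k
      (fun a t => a • (TensorProduct.lift
        (LinearMap.mk₂ k
          (fun b c => MulOpposite.op (c * HopfAlgebra.antipode (R := k) b) • m)
          (fun b b' c => by
            simp only [map_add, mul_add, MulOpposite.op_add, add_smul])
          (fun x b c => by
            simp only [map_smul, mul_smul_comm, MulOpposite.op_smul, smul_assoc])
          (fun b c c' => by
            simp only [add_mul, MulOpposite.op_add, add_smul])
          (fun x b c => by
            simp only [smul_mul_assoc, MulOpposite.op_smul, smul_assoc])) t))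
      (fun a a' t => add_smul a a' _)
      (fun x a t => smul_assoc x a _)
      (fun a t t' => by simp only [map_add, smul_add])
      (fun x a t => by
        simp only [map_smul]
        exact (smul_comm x a _).symm))

@[simp] lemma tripleMap_tmul (m : M) (a b c : H) :
    tripleMap (k := k) m (a ⊗ₜ[k] (b ⊗ₜ[k] c)) =
      a • (MulOpposite.op (c * HopfAlgebra.antipode (R := k) b) • m) := by
  simp [tripleMap]

end Aux

/-- For a cocommutative Hopf algebra `H` over `k` and an `(H,H)`-bimodule `M`, the
`k`-submodule of `M` spanned by the commutators `h • m - m • h` coincides with the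
`k`-submodule spanned by the elements `ad(h)(m) - ϵ(h) • m`, where
`ad(h)(m) = Σ h₍₁₎ • m • S(h₍₂₎)` is the adjoint action and `ϵ` is the counit.
(Equivalently, the identity of `M` induces an isomorphism between the Hochschild-type
coinvariants of the bimodule `M` and the coinvariants of `M` for the adjoint `H`-action;
this is the module-level content of the identification `Tr(F_M, H-mod) ≃ M ⊗_H 𝟙`,
equation (e:Tr for Hopf).) -/
theorem commutator_span_eq_adjoint_span {k H M : Type u}
    [CommRing k] [Ring H] [HopfAlgebra k H]
    [AddCommGroup M] [Module k M] [Module H M] [Module Hᵐᵒᵖ M]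
    [IsScalarTower k H M] [IsScalarTower k Hᵐᵒᵖ M]
    [SMulCommClass k H M] [SMulCommClass H Hᵐᵒᵖ M]
    (hcocomm : ∀ h : H, TensorProduct.comm k H H (Coalgebra.comul h) = Coalgebra.comul h) :
    Submodule.span k {x : M | ∃ (h : H) (m : M), x = h • m - MulOpposite.op h • m} =
      Submodule.span k {x : M | ∃ (h : H) (m : M),
        x = adjointAction k h m - Coalgebra.counit (R := k) h • m} := by
  apply le_antisymm <;> rw [Submodule.span_le] <;> rintro x ⟨h, m, rfl⟩
  · -- commutator ⊆ adjoint span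
    set S : H →ₗ[k] H := HopfAlgebra.antipode (R := k)
    set ε : H →ₗ[k] k := Coalgebra.counit (R := k)
    set r : Coalgebra.Repr k h (H × H) := Coalgebra.Repr.arbitrary k h with hr
    have key : h • m - MulOpposite.op h • m =
        ∑ i ∈ r.index,
          (adjointAction k (r.left i) (MulOpposite.op (r.right i) • m)
            - ε (r.left i) • (MulOpposite.op (r.right i) • m)) := by
      rw [Finset.sum_sub_distrib]
      have h2 : ∑ i ∈ r.index, ε (r.left i) • (MulOpposite.op (r.right i) • m)
          = MulOpposite.op h • m := by
        rw [show (MulOpposite.op h : Hᵐᵒᵖ)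
            = MulOpposite.op (∑ i ∈ r.index, ε (r.left i) • r.right i) from by
          rw [sum_counit_smul_right r]]
        rw [op_finset_sum, Finset.sum_smul]
        exact Finset.sum_congr rfl fun i _ => by rw [MulOpposite.op_smul, smul_assoc]
      have h1 : ∑ i ∈ r.index,
          adjointAction k (r.left i) (MulOpposite.op (r.right i) • m) = h • m := by
        set s : (i : H × H) → Coalgebra.Repr k (r.left i) (H × H) :=
          fun i => Coalgebra.Repr.arbitrary k (r.left i)
        set t : (i : H × H) → Coalgebra.Repr k (r.right i) (H × H) :=
          fun i => Coalgebra.Repr.arbitrary k (r.right i)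
        have step1 : ∑ i ∈ r.index,
            adjointAction k (r.left i) (MulOpposite.op (r.right i) • m)
            = tripleMap (k := k) m (∑ i ∈ r.index, ∑ j ∈ (s i).index,
                (s i).left j ⊗ₜ[k] ((s i).right j ⊗ₜ[k] r.right i)) := by
          rw [map_sum]
          refine Finset.sum_congr rfl fun i _ => ?_
          rw [adjointAction_repr _ (s i), map_sum]
          refine Finset.sum_congr rfl fun j _ => ?_
          rw [tripleMap_tmul, op_smul_op_smul']
        have step2 : (∑ i ∈ r.index, ∑ j ∈ (s i).index,
              (s i).left j ⊗ₜ[k] ((s i).right j ⊗ₜ[k] r.right i))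
            = ∑ i ∈ r.index, ∑ j ∈ (t i).index,
              r.left i ⊗ₜ[k] ((t i).left j ⊗ₜ[k] (t i).right j) :=
          Coalgebra.sum_tmul_tmul_eq r s t
        rw [step1, step2, map_sum]
        have step3 : ∀ i ∈ r.index,
            tripleMap (k := k) m (∑ j ∈ (t i).index,
              r.left i ⊗ₜ[k] ((t i).left j ⊗ₜ[k] (t i).right j))
            = ε (r.right i) • (r.left i • m) := by
          intro i _
          rw [map_sum]
          have inner : ∑ j ∈ (t i).index,
              tripleMap (k := k) m (r.left i ⊗ₜ[k] ((t i).left j ⊗ₜ[k] (t i).right j))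
              = r.left i • (MulOpposite.op
                  (∑ j ∈ (t i).index, (t i).right j * S ((t i).left j)) • m) := by
            rw [op_finset_sum, Finset.sum_smul, Finset.smul_sum]
            refine Finset.sum_congr rfl fun j _ => ?_
            rw [tripleMap_tmul]
          rw [inner]
          have hswap : ∑ j ∈ (t i).index, (t i).right j * S ((t i).left j)
              = ε (r.right i) • 1 :=
            HopfAlgebra.sum_mul_antipode_eq_smul (swapRepr (t i) (hcocomm (r.right i)))
          rw [hswap, MulOpposite.op_smul, MulOpposite.op_one, smul_assoc, one_smul,
            smul_comm]
        rw [Finset.sum_congr rfl step3]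
        simp only [← smul_assoc]
        rw [← Finset.sum_smul, sum_counit_smul_left r]
      rw [h1, h2]
    rw [key]
    exact Submodule.sum_mem _ fun i _ => Submodule.subset_span
      ⟨r.left i, MulOpposite.op (r.right i) • m, rfl⟩
  · -- adjoint ⊆ commutator span
    set S : H →ₗ[k] H := HopfAlgebra.antipode (R := k)
    set ε : H →ₗ[k] k := Coalgebra.counit (R := k)
    set r : Coalgebra.Repr k h (H × H) := Coalgebra.Repr.arbitrary k h with hr
    have key : adjointAction k h m - ε h • m =
        ∑ i ∈ r.index,
          (r.left i • (MulOpposite.op (S (r.right i)) • m)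
            - MulOpposite.op (r.left i) • (MulOpposite.op (S (r.right i)) • m)) := by
      rw [Finset.sum_sub_distrib, adjointAction_repr m r]
      congr 1
      have : ∑ i ∈ r.index,
          MulOpposite.op (r.left i) • (MulOpposite.op (S (r.right i)) • m)
          = MulOpposite.op (∑ i ∈ r.index, S (r.right i) * r.left i) • m := by
        rw [op_finset_sum, Finset.sum_smul]
        exact Finset.sum_congr rfl fun i _ => op_smul_op_smul' _ _ _
      have hswap : ∑ i ∈ r.index, S (r.right i) * r.left i = ε h • 1 :=
        HopfAlgebra.sum_antipode_mul_eq_smul (swapRepr r (hcocomm h))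
      rw [this, hswap, MulOpposite.op_smul, MulOpposite.op_one, smul_assoc, one_smul]
    rw [key]
    exact Submodule.sum_mem _ fun i _ => Submodule.subset_span
      ⟨r.left i, MulOpposite.op (S (r.right i)) • m, rfl⟩
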